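/- (Bound on the Lagrange multiplier.) Let Ω ⊂ ℝ² be a bounded open set of positive Lebesgue measure |Ω|, let ε > 0, let ρ : closure(Ω) → ℝ be continuously differentiable with −1/2 ≤ ρ(x) ≤ 3/2 for all x, and let P : closure(Ω) → ℝ² be continuous. Define λ := (1/|Ω|) ∫_Ω (W'(ρ(x))/ε² + P(x)·∇ρ(x)) dx. Then |λ| ≤ (√6 / (|Ω|^{1/2} ε²)) (∫_Ω W(ρ(x)) dx)^{1/2} + (1/|Ω|) (∫_Ω |∇ρ(x)|² dx)^{1/2} (∫_Ω |P(x)|² dx)^{1/2}. -/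

import Mathlib

/-!
Write `λ|Ω|` as `∫ W'(ρ)/ε² + ∫ ⟨P, ∇ρ⟩`. On `[-1/2, 3/2]` one has
`W'(r)² = (1 - 2r)² W(r) ≤ 6 W(r)`, so Cauchy–Schwarz against the constant `1` bounds the first
integral by `√(6|Ω|)/ε² · (∫ W(ρ))^{1/2}`, and Cauchy–Schwarz in `L²(Ω; ℝ²)` bounds the second by
`‖∇ρ‖₂ ‖P‖₂`. Regularity up to the compact boundary makes every integrand bounded on `Ω`, so none
of the integrals is a junk value.
-/

open Real MeasureTheory Set Filter Topology

noncomputable def doubleWell (r : ℝ) : ℝ := 1 / 4 * r ^ 2 * (1 - r) ^ 2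

noncomputable def doubleWellDeriv (r : ℝ) : ℝ := 1 / 2 * r * (1 - r) * (1 - 2 * r)

lemma continuous_doubleWell : Continuous doubleWell := by
  unfold doubleWell; fun_prop

lemma continuous_doubleWellDeriv : Continuous doubleWellDeriv := by
  unfold doubleWellDeriv; fun_prop

lemma doubleWell_nonneg (r : ℝ) : 0 ≤ doubleWell r := by
  unfold doubleWell; positivity

lemma sq_doubleWellDeriv_le {r : ℝ} (hr : r ∈ Icc (-(1 / 2)) (3 / 2)) :
    doubleWellDeriv r ^ 2 ≤ 6 * doubleWell r := by
  have hsq : doubleWellDeriv r ^ 2 = (1 - 2 * r) ^ 2 * doubleWell r := by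
    unfold doubleWellDeriv doubleWell; ring
  have hfactor : (1 - 2 * r) ^ 2 ≤ 6 := by nlinarith [hr.1, hr.2]
  rw [hsq]
  exact mul_le_mul_of_nonneg_right hfactor (doubleWell_nonneg r)

lemma IsCompact.exists_bound_of_eventually_nhdsWithin {X E : Type*} [TopologicalSpace X]
    [SeminormedAddCommGroup E] {K s : Set X} (hK : IsCompact K) (hsK : s ⊆ K) {g : X → E}
    (hg : ∀ x ∈ K, ∃ C, ∀ᶠ y in 𝓝[s] x, ‖g y‖ ≤ C) : ∃ C, ∀ y ∈ s, ‖g y‖ ≤ C := by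
  suffices h : ∃ C, ∀ y ∈ K ∩ s, ‖g y‖ ≤ C by
    simpa [inter_eq_right.2 hsK] using h
  refine hK.induction_on (p := fun t => ∃ C, ∀ y ∈ t ∩ s, ‖g y‖ ≤ C) ⟨0, by simp⟩
    (fun t u htu ⟨C, hC⟩ => ⟨C, fun y hy => hC y ⟨htu hy.1, hy.2⟩⟩)
    (fun t u ⟨C, hC⟩ ⟨D, hD⟩ => ⟨max C D, ?_⟩) fun x hx => ?_
  · rintro y ⟨hy | hy, hys⟩
    · exact (hC y ⟨hy, hys⟩).trans (le_max_left _ _)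
    · exact (hD y ⟨hy, hys⟩).trans (le_max_right _ _)
  · obtain ⟨C, hC⟩ := hg x hx
    exact ⟨_, mem_nhdsWithin_of_mem_nhds (eventually_nhdsWithin_iff.1 hC), C,
      fun y hy => hy.1 hy.2⟩

section Derivative

variable {E F : Type*} [NormedAddCommGroup E] [NormedSpace ℝ E] [NormedAddCommGroup F]
  [NormedSpace ℝ F] {f : E → F} {s t : Set E}

/- The `C¹` structure gives a continuous `f'` on a neighbourhood `u` of `x` within `t`; at points
of the open set `s` near `x`, `u` is a genuine neighbourhood, so `f'` is the Fréchet derivative. -/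
lemma ContDiffWithinAt.exists_eventually_norm_fderiv_le {x : E}
    (hf : ContDiffWithinAt ℝ 1 f t x) (hx : x ∈ t) (hs : IsOpen s) (hst : s ⊆ t) :
    ∃ C, ∀ᶠ y in 𝓝[s] x, ‖fderiv ℝ f y‖ ≤ C := by
  obtain ⟨u, hu, -, f', hf', hf'c⟩ :=
    (contDiffWithinAt_succ_iff_hasFDerivWithinAt (n := 0) (by simp)).1 (by simpa using hf)
  rw [insert_eq_of_mem hx] at hu
  have hbound : ∀ᶠ y in 𝓝[t] x, ‖f' y‖ ≤ ‖f' x‖ + 1 :=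
    nhdsWithin_le_of_mem hu <| (hf'c.continuousWithinAt.norm.eventually
      (gt_mem_nhds (lt_add_one ‖f' x‖))).mono fun _ => le_of_lt
  refine ⟨‖f' x‖ + 1, ?_⟩
  filter_upwards [nhdsWithin_mono x hst (hbound.and (eventually_eventually_nhdsWithin.2 hu)),
    self_mem_nhdsWithin] with y ⟨hy, hyu⟩ hys
  have hu_nhds : u ∈ 𝓝 y := by
    rwa [nhdsWithin_eq_nhds.2 (mem_of_superset (hs.mem_nhds hys) hst)] at hyu
  rwa [((hf' y (mem_of_mem_nhds hu_nhds)).hasFDerivAt hu_nhds).fderiv]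

lemma ContDiffOn.exists_norm_fderiv_le (hf : ContDiffOn ℝ 1 f (closure s)) (hs : IsOpen s)
    (hK : IsCompact (closure s)) : ∃ C, ∀ x ∈ s, ‖fderiv ℝ f x‖ ≤ C :=
  hK.exists_bound_of_eventually_nhdsWithin subset_closure fun x hx =>
    (hf x hx).exists_eventually_norm_fderiv_le hx hs subset_closure

end Derivative

namespace MeasureTheory

variable {α : Type*} [MeasurableSpace α] {μ : Measure α}

lemma integral_norm_mul_norm_le_sqrt_mul_sqrt {E : Type*} [NormedAddCommGroup E]
    {f g : α → E} (hf : MemLp f 2 μ) (hg : MemLp g 2 μ) :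
    ∫ x, ‖f x‖ * ‖g x‖ ∂μ ≤ √(∫ x, ‖f x‖ ^ 2 ∂μ) * √(∫ x, ‖g x‖ ^ 2 ∂μ) := by
  have h := integral_mul_norm_le_Lp_mul_Lq .two_two (by simpa using hf) (by simpa using hg)
  simpa [Real.sqrt_eq_rpow] using h

section InnerProduct

variable {E : Type*} [NormedAddCommGroup E] [InnerProductSpace ℝ E] {f g : α → E}

lemma MemLp.integrable_inner (hf : MemLp f 2 μ) (hg : MemLp g 2 μ) :
    Integrable (fun x => inner ℝ (f x) (g x)) μ :=
  (hf.norm.integrable_mul hg.norm).mono' (hf.1.inner hg.1)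
    (ae_of_all _ fun _ => (norm_eq_abs _).trans_le (abs_real_inner_le_norm _ _))

lemma abs_integral_inner_le_sqrt_mul_sqrt (hf : MemLp f 2 μ) (hg : MemLp g 2 μ) :
    |∫ x, inner ℝ (f x) (g x) ∂μ| ≤ √(∫ x, ‖f x‖ ^ 2 ∂μ) * √(∫ x, ‖g x‖ ^ 2 ∂μ) :=
  calc |∫ x, inner ℝ (f x) (g x) ∂μ| ≤ ∫ x, |inner ℝ (f x) (g x)| ∂μ :=
        abs_integral_le_integral_abs
    _ ≤ ∫ x, ‖f x‖ * ‖g x‖ ∂μ :=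
        integral_mono_of_nonneg (ae_of_all _ fun _ => abs_nonneg _)
          (hf.norm.integrable_mul hg.norm) (ae_of_all _ fun _ => abs_real_inner_le_norm _ _)
    _ ≤ _ := integral_norm_mul_norm_le_sqrt_mul_sqrt hf hg

end InnerProduct

lemma abs_integral_le_sqrt_measureReal_mul_sqrt [IsFiniteMeasure μ] {f : α → ℝ}
    (hf : MemLp f 2 μ) : |∫ x, f x ∂μ| ≤ √(μ.real univ) * √(∫ x, f x ^ 2 ∂μ) := by
  simpa using abs_integral_inner_le_sqrt_mul_sqrt (memLp_const (1 : ℝ)) hf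

lemma _root_.Continuous.memLp_comp_of_ae_mem [IsFiniteMeasure μ] {g : ℝ → ℝ} (hg : Continuous g)
    {K : Set ℝ} (hK : IsCompact K) {ρ : α → ℝ} (hρm : AEStronglyMeasurable ρ μ)
    (hρK : ∀ᵐ x ∂μ, ρ x ∈ K) (p : ENNReal) : MemLp (fun x => g (ρ x)) p μ := by
  obtain ⟨C, hC⟩ := hK.exists_bound_of_continuousOn hg.continuousOn
  exact .of_bound (hg.comp_aestronglyMeasurable hρm) C (hρK.mono fun x hx => hC _ hx)

lemma abs_integral_doubleWellDeriv_div_le [IsFiniteMeasure μ] {ρ : α → ℝ}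
    (hρm : AEStronglyMeasurable ρ μ) (hρ : ∀ᵐ x ∂μ, ρ x ∈ Icc (-(1 / 2)) (3 / 2))
    (ε : ℝ) :
    |∫ x, doubleWellDeriv (ρ x) / ε ^ 2 ∂μ| ≤
      √6 / ε ^ 2 * √(μ.real univ) * √(∫ x, doubleWell (ρ x) ∂μ) := by
  have hW' := (continuous_doubleWellDeriv.div_const (ε ^ 2)).memLp_comp_of_ae_mem isCompact_Icc
    hρm hρ 2
  have hW := (continuous_doubleWell.memLp_comp_of_ae_mem isCompact_Icc hρm hρ 1).integrable le_rfl
  have hsq : ∫ x, (doubleWellDeriv (ρ x) / ε ^ 2) ^ 2 ∂μ ≤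
      (√6 / ε ^ 2) ^ 2 * ∫ x, doubleWell (ρ x) ∂μ := by
    rw [← integral_const_mul]
    refine integral_mono_ae hW'.integrable_sq (hW.const_mul _) ?_
    filter_upwards [hρ] with x hx
    rw [div_pow, div_pow, Real.sq_sqrt (by norm_num), div_mul_eq_mul_div]
    gcongr
    exact sq_doubleWellDeriv_le hx
  calc |∫ x, doubleWellDeriv (ρ x) / ε ^ 2 ∂μ|
      ≤ √(μ.real univ) * √(∫ x, (doubleWellDeriv (ρ x) / ε ^ 2) ^ 2 ∂μ) :=
        abs_integral_le_sqrt_measureReal_mul_sqrt hW'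
    _ ≤ √(μ.real univ) * (√6 / ε ^ 2 * √(∫ x, doubleWell (ρ x) ∂μ)) := by
        gcongr
        rw [← Real.sqrt_sq (by positivity : 0 ≤ √6 / ε ^ 2), ← Real.sqrt_mul (sq_nonneg _)]
        exact Real.sqrt_le_sqrt hsq
    _ = _ := by ring

section Restrict

variable [TopologicalSpace α] [OpensMeasurableSpace α] [SecondCountableTopology α] {s : Set α}
  [IsFiniteMeasure (μ.restrict s)]

lemma _root_.ContinuousOn.memLp_restrict_of_bound {E : Type*} [NormedAddCommGroup E]
    {f : α → E} (hf : ContinuousOn f s) (hs : IsOpen s) {C : ℝ} (hC : ∀ x ∈ s, ‖f x‖ ≤ C)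
    (p : ENNReal) : MemLp f p (μ.restrict s) :=
  .of_bound (hf.aestronglyMeasurable hs.measurableSet) C
    ((ae_restrict_iff' hs.measurableSet).2 (ae_of_all _ hC))

lemma _root_.ContinuousOn.memLp_restrict_of_isCompact_closure {E : Type*} [NormedAddCommGroup E]
    {f : α → E} (hf : ContinuousOn f (closure s)) (hs : IsOpen s) (hK : IsCompact (closure s))
    (p : ENNReal) : MemLp f p (μ.restrict s) :=
  let ⟨_, hC⟩ := hK.exists_bound_of_continuousOn hf
  (hf.mono subset_closure).memLp_restrict_of_bound hs (fun x hx => hC x (subset_closure hx)) p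

end Restrict

lemma _root_.ContDiffOn.memLp_gradient_restrict {F : Type*} [NormedAddCommGroup F]
    [InnerProductSpace ℝ F] [CompleteSpace F] [MeasurableSpace F] [BorelSpace F]
    [SecondCountableTopology F] {μ : Measure F} {s : Set F} [IsFiniteMeasure (μ.restrict s)]
    {f : F → ℝ} (hf : ContDiffOn ℝ 1 f (closure s)) (hs : IsOpen s) (hK : IsCompact (closure s))
    (p : ENNReal) : MemLp (gradient f) p (μ.restrict s) :=
  let ⟨_, hC⟩ := hf.exists_norm_fderiv_le hs hK
  ((InnerProductSpace.toDual ℝ F).symm.continuous.comp_continuousOn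
    ((hf.mono subset_closure).continuousOn_fderiv_of_isOpen hs le_rfl)).memLp_restrict_of_bound hs
    (fun x hx => ((InnerProductSpace.toDual ℝ F).symm.norm_map _).trans_le (hC x hx)) p

end MeasureTheory

theorem lagrange_multiplier_bound
    (Ω : Set (EuclideanSpace ℝ (Fin 2))) (hΩo : IsOpen Ω) (hΩb : Bornology.IsBounded Ω)
    (ε : ℝ)
    (ρ : EuclideanSpace ℝ (Fin 2) → ℝ) (hρ : ContDiffOn ℝ 1 ρ (closure Ω))
    (hρb : ∀ x ∈ closure Ω, -(1/2) ≤ ρ x ∧ ρ x ≤ 3/2)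
    (P : EuclideanSpace ℝ (Fin 2) → EuclideanSpace ℝ (Fin 2))
    (hP : ContinuousOn P (closure Ω)) :
    |(volume Ω).toReal⁻¹ *
        ∫ x in Ω, (((1/2) * ρ x * (1 - ρ x) * (1 - 2 * ρ x)) / ε^2
          + @inner ℝ _ _ (P x) (gradient ρ x))| ≤
      Real.sqrt 6 / (Real.sqrt (volume Ω).toReal * ε^2) *
          Real.sqrt (∫ x in Ω, (1/4) * (ρ x)^2 * (1 - ρ x)^2)
        + (volume Ω).toReal⁻¹ * Real.sqrt (∫ x in Ω, ‖gradient ρ x‖^2) *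
            Real.sqrt (∫ x in Ω, ‖P x‖^2) := by
  set V := (volume Ω).toReal
  have hK : IsCompact (closure Ω) := hΩb.isCompact_closure
  have : IsFiniteMeasure (volume.restrict Ω) := isFiniteMeasure_restrict.2 hΩb.measure_lt_top.ne
  have hρm : AEStronglyMeasurable ρ (volume.restrict Ω) :=
    (hρ.continuousOn.mono subset_closure).aestronglyMeasurable hΩo.measurableSet
  have hρΩ : ∀ᵐ x ∂volume.restrict Ω, ρ x ∈ Icc (-(1 / 2)) (3 / 2) :=
    (ae_restrict_iff' hΩo.measurableSet).2 (ae_of_all _ fun x hx => hρb x (subset_closure hx))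
  have hW' : Integrable (fun x => doubleWellDeriv (ρ x) / ε ^ 2) (volume.restrict Ω) :=
    ((continuous_doubleWellDeriv.div_const _).memLp_comp_of_ae_mem isCompact_Icc hρm hρΩ
      1).integrable le_rfl
  have hgrad := hρ.memLp_gradient_restrict (μ := volume) hΩo hK 2
  have hP2 := hP.memLp_restrict_of_isCompact_closure (μ := volume) hΩo hK 2
  have hWbound := abs_integral_doubleWellDeriv_div_le hρm hρΩ ε
  rw [measureReal_restrict_apply_univ] at hWbound
  calc |V⁻¹ * ∫ x in Ω, (doubleWellDeriv (ρ x) / ε ^ 2 + inner ℝ (P x) (gradient ρ x))|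
      = V⁻¹ * |(∫ x in Ω, doubleWellDeriv (ρ x) / ε ^ 2) +
          ∫ x in Ω, inner ℝ (P x) (gradient ρ x)| := by
        rw [integral_add hW' (hP2.integrable_inner hgrad), abs_mul,
          abs_of_nonneg (inv_nonneg.2 ENNReal.toReal_nonneg)]
    _ ≤ V⁻¹ * (√6 / ε ^ 2 * √V * √(∫ x in Ω, doubleWell (ρ x)) +
          √(∫ x in Ω, ‖P x‖ ^ 2) * √(∫ x in Ω, ‖gradient ρ x‖ ^ 2)) := by
        gcongr
        exact (abs_add_le _ _).trans
          (add_le_add hWbound (abs_integral_inner_le_sqrt_mul_sqrt hP2 hgrad))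
    _ = √6 / (√V * ε ^ 2) * √(∫ x in Ω, doubleWell (ρ x)) +
          V⁻¹ * √(∫ x in Ω, ‖gradient ρ x‖ ^ 2) * √(∫ x in Ω, ‖P x‖ ^ 2) := by
        linear_combination
          √6 * (ε ^ 2)⁻¹ * √(∫ x in Ω, doubleWell (ρ x)) * Real.sqrt_div_self (x := V)
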